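/- arXiv:1708.02394 — 2 statements merged into one kernel-verified Lean document; each statement's English description precedes it below -/
import Mathlib

section
/- If P : ℝ^n → ℝ^n is continuous and strictly monotone with a zero at x*, then there exists a class-K function φ (continuous, strictly increasing, φ(0) = 0) such that ⟨x - x*, P(x)⟩ ≥ φ(‖x - x*‖) for all x in any fixed compact set containing x*. -/
/-!
Put `f x = ⟪x - x*, P x⟫` and `d x = ‖x - x*‖`; strict monotonicity gives `f > 0` wherever
`d > 0`. The function `g s = inf_{x ∈ K} (f x + (s - d x)⁺)` is continuous (an infimum over a
compact set of a jointly continuous function), nondecreasing, satisfies `g (d x) ≤ f x` on `K`,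
and is positive for `s > 0`: at a minimiser either `f x > 0`, or `d x = 0` and the penalty is `s`.
Multiplying by `s / (1 + s)` makes it strictly increasing and zero at `0` while keeping it
below `g`.
-/

open Set Filter

def IsClassK (φ : ℝ → ℝ) : Prop :=
  ContinuousOn φ (Ici 0) ∧ StrictMonoOn φ (Ici 0) ∧ φ 0 = 0

theorem exists_isClassK_le {g : ℝ → ℝ} (hcont : ContinuousOn g (Ici 0))
    (hmono : MonotoneOn g (Ici 0)) (hpos : ∀ s, 0 < s → 0 < g s) :
    ∃ φ, IsClassK φ ∧ ∀ s, 0 ≤ s → φ s ≤ g s := by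
  have hg0 : 0 ≤ g 0 :=
    ge_of_tendsto ((hcont 0 self_mem_Ici).mono Ioi_subset_Ici_self)
      (eventually_nhdsWithin_of_forall fun s hs => (hpos s hs).le)
  have hg : ∀ s, 0 ≤ s → 0 ≤ g s := fun s hs =>
    hs.eq_or_lt.elim (fun h => h ▸ hg0) fun h => (hpos s h).le
  have hweight : StrictMonoOn (fun s : ℝ => s / (1 + s)) (Ici 0) := by
    intro a ha b hb hab
    simp only [mem_Ici] at ha hb
    rw [div_lt_div_iff₀ (by linarith) (by linarith)]
    nlinarith
  refine ⟨fun s => g s * (s / (1 + s)), ⟨?_, ?_, by simp⟩, fun s hs => ?_⟩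
  · exact hcont.mul (continuousOn_id.div (continuousOn_const.add continuousOn_id)
      fun s hs => by simp only [mem_Ici] at hs; linarith)
  · intro a ha b hb hab
    simp only [mem_Ici] at ha hb
    calc g a * (a / (1 + a)) ≤ g b * (a / (1 + a)) :=
          mul_le_mul_of_nonneg_right (hmono ha hb hab.le) (by positivity)
      _ < g b * (b / (1 + b)) :=
          mul_lt_mul_of_pos_left (hweight ha hb hab) (hpos b (ha.trans_lt hab))
  · have : s / (1 + s) ≤ 1 := by rw [div_le_one (by linarith)]; linarith
    simpa using mul_le_mul_of_nonneg_left this (hg s hs)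

section radialMinorant

variable {X : Type*} [TopologicalSpace X] {f d : X → ℝ} {K : Set X}

noncomputable def radialMinorant (f d : X → ℝ) (K : Set X) (s : ℝ) : ℝ :=
  sInf ((fun x => f x + max 0 (s - d x)) '' K)

theorem continuous_radialMinorant (hK : IsCompact K) (hf : Continuous f) (hd : Continuous d) :
    Continuous (radialMinorant f d K) :=
  hK.continuous_sInf (f := fun s x => f x + max 0 (s - d x)) (by fun_prop)

theorem monotone_radialMinorant (hK : IsCompact K) (hf : Continuous f) (hd : Continuous d) :
    Monotone (radialMinorant f d K) := by
  intro s t hst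
  rcases K.eq_empty_or_nonempty with rfl | hne
  · simp [radialMinorant]
  refine le_csInf (hne.image _) ?_
  rintro _ ⟨x, hx, rfl⟩
  calc radialMinorant f d K s ≤ f x + max 0 (s - d x) :=
        csInf_le (hK.bddBelow_image (by fun_prop)) ⟨x, hx, rfl⟩
    _ ≤ f x + max 0 (t - d x) := by gcongr

theorem radialMinorant_le (hK : IsCompact K) (hf : Continuous f) (hd : Continuous d) {x : X}
    (hx : x ∈ K) : radialMinorant f d K (d x) ≤ f x := by
  simpa [radialMinorant] using csInf_le (hK.bddBelow_image (f := fun y => f y + max 0 (d x - d y)) (by fun_prop))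
    ⟨x, hx, rfl⟩

theorem radialMinorant_pos (hK : IsCompact K) (hne : K.Nonempty) (hf : Continuous f)
    (hd : Continuous d) (hf₀ : ∀ x ∈ K, 0 ≤ f x) (hpos : ∀ x ∈ K, 0 < d x → 0 < f x)
    {s : ℝ} (hs : 0 < s) : 0 < radialMinorant f d K s := by
  obtain ⟨x, hx, hmin⟩ := hK.exists_sInf_image_eq hne
    (f := fun x => f x + max 0 (s - d x)) (by fun_prop)
  rw [radialMinorant, hmin]
  rcases (hf₀ x hx).eq_or_lt with hfx | hfx
  · have hdx : d x ≤ 0 := not_lt.mp fun h => (hpos x hx h).ne' hfx.symm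
    have : s ≤ max 0 (s - d x) := le_max_of_le_right (by linarith)
    linarith
  · have := le_max_left 0 (s - d x)
    linarith

end radialMinorant

/-- If `P : ℝ^n → ℝ^n` is continuous and strictly monotone with a zero at `x*`, then on any
fixed compact set `K` containing `x*` there is a class-`K` function `φ` such that
`⟪x - x*, P x⟫ ≥ φ(‖x - x*‖)` for all `x ∈ K`. -/
theorem stmt_2 {n : ℕ} (P : EuclideanSpace ℝ (Fin n) → EuclideanSpace ℝ (Fin n))
    (hc : Continuous P)
    (hmono : ∀ x y, x ≠ y → (0 : ℝ) < inner ℝ (x - y) (P x - P y))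
    (xstar : EuclideanSpace ℝ (Fin n)) (hz : P xstar = 0)
    (K : Set (EuclideanSpace ℝ (Fin n))) (hK : IsCompact K) (hxK : xstar ∈ K) :
    ∃ φ : ℝ → ℝ, ContinuousOn φ (Set.Ici 0) ∧ StrictMonoOn φ (Set.Ici 0) ∧ φ 0 = 0 ∧
      ∀ x ∈ K, φ ‖x - xstar‖ ≤ (inner ℝ (x - xstar) (P x) : ℝ) := by
  set f := fun x => inner ℝ (x - xstar) (P x)
  set d := fun x => ‖x - xstar‖
  have hf : Continuous f := (continuous_id.sub continuous_const).inner hc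
  have hd : Continuous d := (continuous_id.sub continuous_const).norm
  have hpos : ∀ x, 0 < d x → 0 < f x := fun x hx => by
    simpa [f, hz] using hmono x xstar (sub_ne_zero.mp (norm_pos_iff.mp hx))
  have hf₀ : ∀ x, 0 ≤ f x := fun x => by
    rcases eq_or_ne x xstar with rfl | hx
    · simp [f]
    · exact (hpos x (norm_pos_iff.mpr (sub_ne_zero.mpr hx))).le
  obtain ⟨φ, ⟨hφc, hφm, hφ0⟩, hφg⟩ := exists_isClassK_le
    (continuous_radialMinorant hK hf hd).continuousOn
    ((monotone_radialMinorant hK hf hd).monotoneOn _)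
    fun s => radialMinorant_pos hK ⟨xstar, hxK⟩ hf hd (fun x _ => hf₀ x) (fun x _ => hpos x)
  exact ⟨φ, hφc, hφm, hφ0, fun x hx =>
    (hφg _ (norm_nonneg _)).trans (radialMinorant_le hK hf hd hx)⟩
end

section
/- Let G_I be a finite simple undirected connected graph on vertex set V, let G_m be a maximal triangle-free spanning subgraph of G_I, and let G_C be any spanning subgraph with G_m ⊆ G_C ⊆ G_I. Then for every vertex k ∈ V, the induced subgraph of G_C on the closed neighborhood N_I(k) ∪ {k} (neighbors of k in G_I together with k) is connected. -/
/-- If `G_m ⊆ G_C ⊆ G_I` where `G_I` is connected and `G_m` is a maximal triangle-free spanning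
subgraph of `G_I` (adding any missing edge of `G_I` creates a triangle, i.e. the endpoints have a
common `G_m`-neighbor), then for every vertex `k` the induced subgraph of `G_C` on the closed
`G_I`-neighborhood of `k` is connected. -/
theorem stmt_7 {V : Type*} [Fintype V]
    (GI Gm GC : SimpleGraph V)
    (hI : GI.Connected)
    (hmI : Gm ≤ GI)
    (hTF : Gm.CliqueFree 3)
    (hmax : ∀ u v, GI.Adj u v → ¬ Gm.Adj u v → ∃ w, Gm.Adj u w ∧ Gm.Adj v w)
    (hmC : Gm ≤ GC) (hCI : GC ≤ GI) :
    ∀ k : V, (GC.induce (GI.neighborSet k ∪ {k})).Connected := by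
  intro k
  have hk : (k : V) ∈ GI.neighborSet k ∪ {k} := Or.inr rfl
  rw [SimpleGraph.connected_iff]
  refine ⟨?_, ⟨⟨k, hk⟩⟩⟩
  have key : ∀ u (hu : u ∈ GI.neighborSet k ∪ {k}),
      (GC.induce (GI.neighborSet k ∪ {k})).Reachable ⟨u, hu⟩ ⟨k, hk⟩ := by
    intro u hu
    rcases hu with h | h
    · by_cases hm : Gm.Adj u k
      · exact SimpleGraph.Adj.reachable (hmC hm)
      · obtain ⟨w, hw1, hw2⟩ := hmax u k (GI.adj_symm h) hm
        have hwset : w ∈ GI.neighborSet k ∪ {k} := Or.inl (hmI hw2)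
        exact (SimpleGraph.Adj.reachable
            (show (GC.induce _).Adj ⟨u, Or.inl h⟩ ⟨w, hwset⟩ from hmC hw1)).trans
          (SimpleGraph.Adj.reachable
            (show (GC.induce _).Adj ⟨w, hwset⟩ ⟨k, hk⟩ from (hmC hw2).symm))
    · subst h
      exact SimpleGraph.Reachable.refl _
  intro a b
  exact (key a.1 a.2).trans (key b.1 b.2).symm
end
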